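/- arXiv:2103.12565 — 13 statements merged into one kernel-verified Lean document; each statement's English description precedes it below -/
import Mathlib

section
/- Let L be a finite lattice and let P be a proper subset of L that is woven in L. Then there exists an element p ∈ L ∖ P such that P ∪ {p} is again woven in L. (Indeed, any maximal element p of L ∖ P works.) -/
/-- A subset `P` of a lattice `L` is woven in `L` if for all `p, q ∈ P`,
at least one of `p ⊔ q` and `p ⊓ q` belongs to `P`. -/
def WovenIn {L : Type*} [Lattice L] (P : Set L) : Prop :=
  ∀ p ∈ P, ∀ q ∈ P, p ⊔ q ∈ P ∨ p ⊓ q ∈ P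

/-
A maximal element `p` outside `P` absorbs every join: `p ⊔ q` lies above `p`, so it is either
`p` itself or an element of `P`. Hence `p ⊔ q ∈ P ∪ {p}` for all `q`, which is all that adding
`p` to a woven set requires.
-/

theorem sup_mem_insert_of_maximal_compl {L : Type*} [SemilatticeSup L] {P : Set L} {p : L}
    (hp : Maximal (· ∈ Pᶜ) p) (q : L) : p ⊔ q ∈ insert p P := by
  by_contra h
  rw [Set.mem_insert_iff, not_or] at h
  exact h.1 (le_antisymm (hp.2 h.2 le_sup_left) le_sup_left)

theorem WovenIn.insert {L : Type*} [Lattice L] {P : Set L} {p : L} (hP : WovenIn P)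
    (hp : ∀ q ∈ P, p ⊔ q ∈ insert p P ∨ p ⊓ q ∈ insert p P) : WovenIn (insert p P) := by
  rintro a (rfl | ha) b (rfl | hb)
  · simp
  · exact hp b hb
  · simpa only [sup_comm, inf_comm] using hp a ha
  · exact (hP a ha b hb).imp (Set.mem_insert_of_mem _) (Set.mem_insert_of_mem _)

/-- If `L` is a finite lattice and `P ⊊ L` is woven in `L`, then there is
`p ∈ L ∖ P` such that `P ∪ {p}` is again woven in `L`. -/
theorem stmt_0 {L : Type*} [Lattice L] [Fintype L] (P : Set L)
    (hwoven : WovenIn P) (hproper : P ≠ Set.univ) :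
    ∃ p : L, p ∉ P ∧ WovenIn (insert p P) := by
  obtain ⟨p, hp⟩ := Pᶜ.toFinite.exists_maximal (Set.nonempty_compl.mpr hproper)
  exact ⟨p, hp.1, hwoven.insert fun q _ => .inl (sup_mem_insert_of_maximal_compl hp q)⟩
end

section
/- Let V be a finite set and let 𝒳 ⊊ 2^V be a woven family of subsets of V that is not all of 2^V. Then there exists a set X ⊆ V with X ∉ 𝒳 such that 𝒳 ∪ {X} is again woven. -/
/-!
Take `X` maximal among the sets outside `𝒳`. Every strict superset of `X` lies in `𝒳`, so for
any `Y` the union `X ∪ Y` is either `X` itself or a member of `𝒳`: every pair involving the new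
set `X` has its union in `insert X 𝒳`.
-/

/-- A family `𝒳` of subsets of `V` is woven if for all `X, Y ∈ 𝒳`,
at least one of `X ∪ Y` and `X ∩ Y` belongs to `𝒳`. -/
def WovenFamily {V : Type*} (𝒳 : Set (Set V)) : Prop :=
  ∀ X ∈ 𝒳, ∀ Y ∈ 𝒳, X ∪ Y ∈ 𝒳 ∨ X ∩ Y ∈ 𝒳

theorem union_mem_insert_of_ssuperset_mem {V : Type*} {𝒳 : Set (Set V)} {X : Set V}
    (hX : ∀ Y, X ⊂ Y → Y ∈ 𝒳) (Y : Set V) : X ∪ Y ∈ insert X 𝒳 := by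
  rcases Set.subset_union_left.eq_or_ssubset with h | h
  · exact h ▸ Set.mem_insert X 𝒳
  · exact Set.mem_insert_of_mem X (hX _ h)

theorem WovenFamily.insert_of_ssuperset_mem {V : Type*} {𝒳 : Set (Set V)} (h𝒳 : WovenFamily 𝒳)
    {X : Set V} (hX : ∀ Y, X ⊂ Y → Y ∈ 𝒳) : WovenFamily (insert X 𝒳) := by
  rintro A hA B hB
  rcases hA with hA | hA
  · rw [hA]
    exact Or.inl (union_mem_insert_of_ssuperset_mem hX B)
  rcases hB with hB | hB
  · rw [hB, Set.union_comm]
    exact Or.inl (union_mem_insert_of_ssuperset_mem hX A)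
  exact (h𝒳 A hA B hB).imp (Set.mem_insert_of_mem _) (Set.mem_insert_of_mem _)

/-- If `V` is a finite set and `𝒳 ⊊ 2^V` is woven, then there is a set
`X ⊆ V` with `X ∉ 𝒳` such that `𝒳 ∪ {X}` is again woven. -/
theorem stmt_1 {V : Type*} [Fintype V] (𝒳 : Set (Set V))
    (hwoven : WovenFamily 𝒳) (hproper : 𝒳 ≠ Set.univ) :
    ∃ X : Set V, X ∉ 𝒳 ∧ WovenFamily (insert X 𝒳) := by
  obtain ⟨X, hX⟩ := (Set.toFinite 𝒳ᶜ).exists_maximal (Set.nonempty_compl.mpr hproper)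
  refine ⟨X, hX.prop, hwoven.insert_of_ssuperset_mem fun Y hXY => ?_⟩
  simpa using hX.not_prop_of_gt hXY
end

section
/- Let L be a finite lattice, let f : L → ℝ be a submodular function, let k ∈ ℝ, and let P = {p ∈ L : f(p) < k}. Then P can be unravelled: there is a sequence P = P_n ⊇ P_{n−1} ⊇ ⋯ ⊇ P_0 = ∅ of subsets of L, each woven in L, such that |P_i ∖ P_{i−1}| = 1 for every 1 ≤ i ≤ n. -/
/-!
Order the elements of `L` lexicographically by the value of `f` and then by a linear extension
of the lattice order, and list `P = {f < k}` in increasing order; its prefixes form the chain.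
Every initial segment `Q` of this order is woven: if neither `p ⊓ q` nor `p ⊔ q` comes before
the larger of `p, q ∈ Q`, then both `f (p ⊓ q)` and `f (p ⊔ q)` are at least `max (f p) (f q)`, so
submodularity forces `f (p ⊓ q) = f p`, and then `p ⊓ q ≤ p` puts `p ⊓ q` before `p` after all.
-/

open Function

namespace List

variable {α : Type*}

theorem setOf_mem_take_add_one_sdiff {l : List α} (hl : l.Nodup) {i : ℕ} (hi : i < l.length) :
    {x | x ∈ l.take (i + 1)} \ {x | x ∈ l.take i} = {l[i]} := by
  have hnodup : (l.take i ++ [l[i]]).Nodup := by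
    rw [← take_succ_eq_append_getElem hi]
    exact hl.sublist (take_sublist _ _)
  have hnotMem : l[i] ∉ l.take i := fun h => (nodup_append.mp hnodup).2.2 _ h _
    (mem_singleton_self _) rfl
  have hinsert : {x | x ∈ l.take (i + 1)} = insert l[i] {x | x ∈ l.take i} := by
    ext x
    rw [take_succ_eq_append_getElem hi]
    simp only [Set.mem_ofPred_eq, Set.mem_insert_iff, mem_append, mem_singleton]
    exact Or.comm
  rw [hinsert]
  exact Set.insert_sdiff_eq_singleton hnotMem

theorem SortedLT.mem_take_of_le [LinearOrder α] {l : List α} (hl : l.SortedLT) {i : ℕ}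
    {x y : α} (hx : x ∈ l.take i) (hy : y ∈ l) (hyx : y ≤ x) : y ∈ l.take i := by
  obtain ⟨j, hj, rfl⟩ := mem_take_iff_getElem.mp hx
  obtain ⟨m, hm, rfl⟩ := getElem_of_mem hy
  have hmj : m ≤ j := (hl.getElem_le_getElem_iff).mp hyx
  exact mem_take_iff_getElem.mpr ⟨m, by omega, rfl⟩

end List

theorem Finset.exists_chain_initialSegments_of_injective {α β : Type*} [LinearOrder β] {key : α → β}
    (hkey : Injective key) (s : Finset α) :
    ∃ (n : ℕ) (c : ℕ → Set α), c 0 = ∅ ∧ c n = s ∧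
      (∀ i ≤ n, c i ⊆ s ∧ ∀ x ∈ c i, ∀ y ∈ s, key y ≤ key x → y ∈ c i) ∧
      (∀ i < n, c i ⊆ c (i + 1) ∧ (c (i + 1) \ c i).ncard = 1) := by
  let _ : LinearOrder α := LinearOrder.lift' key hkey
  set l := s.sort
  have hsorted : l.SortedLT := s.sortedLT_sort
  have hmem : ∀ x, x ∈ l ↔ x ∈ s := fun x => s.mem_sort _
  refine ⟨l.length, fun i => {x | x ∈ l.take i}, by simp, by ext; simp [hmem], ?_, ?_⟩
  · intro i _
    refine ⟨fun x hx => (hmem x).mp (List.mem_of_mem_take hx), ?_⟩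
    intro x hx y hy hyx
    exact hsorted.mem_take_of_le hx ((hmem y).mpr hy) hyx
  · intro i hi
    refine ⟨List.take_subset_take_left _ (Nat.le_succ i), ?_⟩
    rw [List.setOf_mem_take_add_one_sdiff hsorted.nodup hi, Set.ncard_singleton]

section Submodular

variable {L : Type*} [Lattice L]

noncomputable def submodularKey (f : L → ℝ) (x : L) : ℝ ×ₗ LinearExtension L :=
  toLex (f x, toLinearExtension x)

theorem submodularKey_injective (f : L → ℝ) : Injective (submodularKey f) :=
  fun _ _ h => congrArg (fun z => (ofLex z).2) h

theorem le_of_submodularKey_le {f : L → ℝ} {x y : L} (h : submodularKey f y ≤ submodularKey f x) :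
    f y ≤ f x :=
  Prod.Lex.monotone_fst _ _ h

theorem submodularKey_inf_le_or_sup_le {f : L → ℝ}
    (hf : ∀ p q : L, f (p ⊔ q) + f (p ⊓ q) ≤ f p + f q) (p q : L) :
    submodularKey f (p ⊓ q) ≤ max (submodularKey f p) (submodularKey f q) ∨
      submodularKey f (p ⊔ q) ≤ max (submodularKey f p) (submodularKey f q) := by
  by_contra! h
  obtain ⟨⟨hinf_p, hinf_q⟩, ⟨hsup_p, hsup_q⟩⟩ := And.imp max_lt_iff.mp max_lt_iff.mp h
  have hfinf : f (p ⊓ q) = f p := by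
    have := le_of_submodularKey_le hinf_p.le
    have := le_of_submodularKey_le hinf_q.le
    have := le_of_submodularKey_le hsup_p.le
    have := le_of_submodularKey_le hsup_q.le
    linarith [hf p q]
  refine hinf_p.not_ge (Prod.Lex.toLex_le_toLex.mpr (Or.inr ⟨hfinf, ?_⟩))
  exact toLinearExtension.monotone inf_le_left

theorem wovenIn_of_submodularKey_le_mem {f : L → ℝ}
    (hf : ∀ p q : L, f (p ⊔ q) + f (p ⊓ q) ≤ f p + f q) {Q : Set L}
    (hQ : ∀ x ∈ Q, ∀ y, submodularKey f y ≤ submodularKey f x → y ∈ Q) : WovenIn Q := by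
  intro p hp q hq
  obtain ⟨z, hz, hmax⟩ : ∃ z ∈ Q, max (submodularKey f p) (submodularKey f q) = submodularKey f z :=
    (max_choice _ _).elim (fun h => ⟨p, hp, h⟩) (fun h => ⟨q, hq, h⟩)
  rcases submodularKey_inf_le_or_sup_le hf p q with hinf | hsup
  · exact Or.inr (hQ z hz _ (hmax ▸ hinf))
  · exact Or.inl (hQ z hz _ (hmax ▸ hsup))

end Submodular

/-- If `L` is a finite lattice, `f : L → ℝ` is submodular, `k : ℝ`, and
`P = {p | f p < k}`, then `P` can be unravelled: there is a chain
`∅ = P₀ ⊆ P₁ ⊆ ⋯ ⊆ Pₙ = P` of sets woven in `L`, each step adding exactly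
one element. -/
theorem stmt_2 {L : Type*} [Lattice L] [Fintype L] (f : L → ℝ)
    (hf : ∀ p q : L, f (p ⊔ q) + f (p ⊓ q) ≤ f p + f q) (k : ℝ) :
    ∃ (n : ℕ) (c : ℕ → Set L),
      c 0 = ∅ ∧ c n = {p : L | f p < k} ∧
      (∀ i ≤ n, WovenIn (c i)) ∧
      (∀ i < n, c i ⊆ c (i + 1) ∧ (c (i + 1) \ c i).ncard = 1) := by
  classical
  obtain ⟨n, c, h0, hn, hprefix, hstep⟩ :=
    {p : L | f p < k}.toFinset.exists_chain_initialSegments_of_injective (submodularKey_injective f)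
  refine ⟨n, c, h0, by simpa using hn, fun i hi => wovenIn_of_submodularKey_le_mem hf ?_, hstep⟩
  intro x hx y hyx
  have hxk : f x < k := by simpa using (hprefix i hi).1 hx
  exact (hprefix i hi).2 x hx y (by simpa using (le_of_submodularKey_le hyx).trans_lt hxk) hyx
end

section
/- Let L be a finite lattice, let f : L → ℝ be a submodular function, let k ∈ ℝ, and let P = {p ∈ L : f(p) < k} be nonempty. If p ∈ P maximises f over P (that is, f(q) ≤ f(p) for all q ∈ P), then P ∖ {p} is woven in L. -/
section Submodular

variable {L : Type*} [Lattice L] {f : L → ℝ} {a b : L}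

lemma inf_le_of_le_sup (hf : ∀ p q : L, f (p ⊔ q) + f (p ⊓ q) ≤ f p + f q)
    (h : f a ≤ f (a ⊔ b)) : f (a ⊓ b) ≤ f b := by
  linarith [hf a b]

lemma inf_lt_of_lt_sup (hf : ∀ p q : L, f (p ⊔ q) + f (p ⊓ q) ≤ f p + f q)
    (h : f b < f (a ⊔ b)) : f (a ⊓ b) < f a := by
  linarith [hf a b]

end Submodular

lemma inf_ne_of_sup_eq {L : Type*} [Lattice L] {a b p : L} (ha : a ≠ p) (hsup : a ⊔ b = p) :
    a ⊓ b ≠ p := by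
  intro hinf
  obtain rfl : a = b := inf_eq_sup.1 (hinf.trans hsup.symm)
  exact ha (by simpa using hsup)

theorem stmt_3_general {L : Type*} [Lattice L] (f : L → ℝ)
    (hf : ∀ p q : L, f (p ⊔ q) + f (p ⊓ q) ≤ f p + f q) (k : ℝ)
    (P : Set L) (hP : P = {p : L | f p < k})
    (p : L) (hmax : ∀ q ∈ P, f q ≤ f p) :
    WovenIn (P \ {p}) := by
  subst hP
  rintro a ⟨ha : f a < k, hap : a ≠ p⟩ b ⟨hb : f b < k, -⟩
  have hfa : f a ≤ f p := hmax a ha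
  by_cases hsup : f (a ⊔ b) < k
  · by_cases hsup_p : a ⊔ b = p
    · have hinf : f (a ⊓ b) ≤ f b := inf_le_of_le_sup hf (hsup_p ▸ hfa)
      exact Or.inr ⟨hinf.trans_lt hb, inf_ne_of_sup_eq hap hsup_p⟩
    · exact Or.inl ⟨hsup, hsup_p⟩
  · have hinf : f (a ⊓ b) < f a := inf_lt_of_lt_sup hf (hb.trans_le (not_lt.1 hsup))
    exact Or.inr ⟨hinf.trans ha, fun h ↦ (hinf.trans_le hfa).ne (congrArg f h)⟩

/-- If `L` is a finite lattice, `f : L → ℝ` is submodular, `P = {p | f p < k}`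
is nonempty and `p ∈ P` maximises `f` over `P`, then `P ∖ {p}` is woven in `L`. -/
theorem stmt_3 {L : Type*} [Lattice L] [Fintype L] (f : L → ℝ)
    (hf : ∀ p q : L, f (p ⊔ q) + f (p ⊓ q) ≤ f p + f q) (k : ℝ)
    (P : Set L) (hP : P = {p : L | f p < k}) (hne : P.Nonempty)
    (p : L) (hp : p ∈ P) (hmax : ∀ q ∈ P, f q ≤ f p) :
    WovenIn (P \ {p}) :=
  stmt_3_general f hf k P hP p hmax
end

section
/- For every finite lattice L there exists an injective submodular function ρ : L → ℕ. Moreover, ρ can be chosen so that for all p₁, p₂, q₁, q₂ ∈ L, one has ρ(p₁) + ρ(p₂) = ρ(q₁) + ρ(q₂) if and only if {p₁, p₂} = {q₁, q₂} (as unordered pairs). -/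
/-!
Let `σ p` count the elements of `L` that are not above `p`. Since `x` lies above `p ⊔ q` iff it
lies above both `p` and `q`, and above `p ⊓ q` whenever it lies above `p` or `q`, `σ` is
submodular; for incomparable `p`, `q` the inequality is strict, as `p ⊓ q` itself is counted by
`σ p` and `σ q` but not by `σ (p ⊓ q)`. Comparable pairs satisfy every such inequality with
equality, so `ρ p = σ p * N + 2 ^ e p`, for an enumeration `e` of `L` and `N` large, stays
submodular. Its pair sums determine the pairs because the powers of two form a Sidon set:
`2 ^ a + 2 ^ b` has binary digits exactly at `a` and `b` if `a ≠ b`, and is `2 ^ (a + 1)` if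
`a = b`.
-/

open Finset Function

lemma Nat.two_pow_add_two_pow_inj {a b c d : ℕ} (h : 2 ^ a + 2 ^ b = 2 ^ c + 2 ^ d) :
    a = c ∧ b = d ∨ a = d ∧ b = c := by
  wlog hab : a ≤ b generalizing a b
  · have := this (b := a) (a := b) (by omega) (by omega)
    omega
  wlog hcd : c ≤ d generalizing c d
  · have := this (d := c) (c := d) (by omega) (by omega)
    omega
  wlog hac : a ≤ c generalizing a b c d
  · have := this hcd h.symm hab (by omega)
    omega
  rcases hac.eq_or_lt with rfl | hac
  · exact .inl ⟨rfl, Nat.pow_right_injective le_rfl (show 2 ^ b = 2 ^ d by omega)⟩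
  exfalso
  -- `2 ^ (a + 1)` divides the right-hand side but not the left one
  have hdvd : 2 ^ (a + 1) ∣ 2 ^ a + 2 ^ b :=
    h ▸ dvd_add (pow_dvd_pow 2 hac) (pow_dvd_pow 2 (by omega))
  rcases hab.eq_or_lt with rfl | hab
  · have hc : 2 ^ (a + 1) ≤ 2 ^ c := Nat.pow_le_pow_right two_pos hac
    have hd : 0 < 2 ^ d := by positivity
    rw [pow_succ] at hc
    omega
  · rw [add_comm (2 ^ a), Nat.dvd_add_right (pow_dvd_pow 2 hab),
      Nat.pow_dvd_pow_iff_le_right one_lt_two] at hdvd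
    omega

lemma Set.pair_eq_pair_of_two_pow_add_eq {α : Type*} {e : α → ℕ} (he : Injective e)
    {p₁ p₂ q₁ q₂ : α} (h : 2 ^ e p₁ + 2 ^ e p₂ = 2 ^ e q₁ + 2 ^ e q₂) :
    ({p₁, p₂} : Set α) = {q₁, q₂} := by
  rw [Set.pair_eq_pair_iff]
  exact (Nat.two_pow_add_two_pow_inj h).imp (And.imp (@he _ _) (@he _ _))
    (And.imp (@he _ _) (@he _ _))

lemma sup_add_inf_le_of_forall_incomparable {L M : Type*} [Lattice L] [AddCommMagma M]
    [Preorder M] {ρ : L → M}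
    (h : ∀ p q : L, ¬p ≤ q → ¬q ≤ p → ρ (p ⊔ q) + ρ (p ⊓ q) ≤ ρ p + ρ q) (p q : L) :
    ρ (p ⊔ q) + ρ (p ⊓ q) ≤ ρ p + ρ q := by
  by_cases hpq : p ≤ q
  · rw [sup_eq_right.mpr hpq, inf_eq_left.mpr hpq, add_comm]
  by_cases hqp : q ≤ p
  · rw [sup_eq_left.mpr hqp, inf_eq_right.mpr hqp]
  exact h p q hpq hqp

section NotAbove

variable {L : Type*} [Lattice L] [Fintype L] [DecidableLE L]

def notAboveCard (p : L) : ℕ := #{x | ¬p ≤ x}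

lemma notAboveCard_sup_add_notAboveCard_inf_lt {p q : L} (hpq : ¬p ≤ q) (hqp : ¬q ≤ p) :
    notAboveCard (p ⊔ q) + notAboveCard (p ⊓ q) < notAboveCard p + notAboveCard q := by
  set T : L → Finset L := fun p => {x | ¬p ≤ x}
  classical
  have hsup : T (p ⊔ q) ⊆ T p ∪ T q := by
    intro x
    simp only [T, mem_union, mem_filter_univ]
    contrapose!
    exact fun h => sup_le h.1 h.2
  have hinf : insert (p ⊓ q) (T (p ⊓ q)) ⊆ T p ∩ T q := by
    intro x
    simp only [T, mem_insert, mem_inter, mem_filter_univ]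
    rintro (rfl | hx)
    · exact ⟨fun h => hpq (h.trans inf_le_right), fun h => hqp (h.trans inf_le_left)⟩
    · exact ⟨fun h => hx (inf_le_left.trans h), fun h => hx (inf_le_right.trans h)⟩
  have hnotin : p ⊓ q ∉ T (p ⊓ q) := by simp [T]
  have h1 := card_le_card hsup
  have h2 := card_le_card hinf
  rw [card_insert_of_notMem hnotin] at h2
  have h3 := card_union_add_card_inter (T p) (T q)
  change #(T (p ⊔ q)) + #(T (p ⊓ q)) < #(T p) + #(T q)
  omega

end NotAbove

section PairSums

variable {α M : Type*}

lemma add_eq_add_of_pair_eq [AddCommMagma M] (ρ : α → M) {p₁ p₂ q₁ q₂ : α}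
    (h : ({p₁, p₂} : Set α) = {q₁, q₂}) : ρ p₁ + ρ p₂ = ρ q₁ + ρ q₂ := by
  rcases Set.pair_eq_pair_iff.mp h with ⟨rfl, rfl⟩ | ⟨rfl, rfl⟩
  · rfl
  · exact add_comm _ _

lemma Function.injective_of_pair_eq_of_add_eq [Add M] {ρ : α → M}
    (h : ∀ p₁ p₂ q₁ q₂, ρ p₁ + ρ p₂ = ρ q₁ + ρ q₂ → ({p₁, p₂} : Set α) = {q₁, q₂}) :
    Injective ρ := fun p q hpq => by
  simpa only [Set.pair_eq_singleton, Set.singleton_eq_singleton_iff] using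
    h p p q q (by rw [hpq])

end PairSums

section Digits

variable {N s₁ s₂ t₁ t₂ r₁ r₂ u₁ u₂ : ℕ}

lemma Nat.add_eq_add_of_mul_add_add_mul_add_eq (hr : r₁ + r₂ < N) (hu : u₁ + u₂ < N)
    (h : s₁ * N + r₁ + (s₂ * N + r₂) = t₁ * N + u₁ + (t₂ * N + u₂)) : r₁ + r₂ = u₁ + u₂ := by
  have h' : (s₁ + s₂) * N + (r₁ + r₂) = (t₁ + t₂) * N + (u₁ + u₂) := by linarith
  simpa [Nat.mod_eq_of_lt hr, Nat.mod_eq_of_lt hu] using congrArg (· % N) h'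

lemma Nat.mul_add_add_mul_add_lt (hs : s₁ + s₂ < t₁ + t₂) (hr : r₁ + r₂ < N) :
    s₁ * N + r₁ + (s₂ * N + r₂) < t₁ * N + u₁ + (t₂ * N + u₂) := by
  nlinarith

end Digits

/-- For every finite lattice `L` there is an injective submodular function
`ρ : L → ℕ` such that moreover `ρ p₁ + ρ p₂ = ρ q₁ + ρ q₂` iff
`{p₁, p₂} = {q₁, q₂}` as unordered pairs. -/
theorem stmt_4 {L : Type*} [Lattice L] [Fintype L] :
    ∃ ρ : L → ℕ, Function.Injective ρ ∧
      (∀ p q : L, ρ (p ⊔ q) + ρ (p ⊓ q) ≤ ρ p + ρ q) ∧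
      (∀ p₁ p₂ q₁ q₂ : L,
        ρ p₁ + ρ p₂ = ρ q₁ + ρ q₂ ↔ ({p₁, p₂} : Set L) = {q₁, q₂}) := by
  classical
  let e : L → ℕ := fun p => Fintype.equivFin L p
  have he : Injective e := Fin.val_injective.comp (Fintype.equivFin L).injective
  obtain ⟨N, hN⟩ : ∃ N, ∀ p q, 2 ^ e p + 2 ^ e q < N := by
    have hlt : ∀ p, 2 ^ e p < 2 ^ Fintype.card L := fun p =>
      Nat.pow_lt_pow_right one_lt_two (Fintype.equivFin L p).isLt
    exact ⟨2 ^ Fintype.card L * 2, fun p q => by linarith [hlt p, hlt q]⟩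
  let ρ : L → ℕ := fun p => notAboveCard p * N + 2 ^ e p
  have hpair : ∀ p₁ p₂ q₁ q₂, ρ p₁ + ρ p₂ = ρ q₁ + ρ q₂ → ({p₁, p₂} : Set L) = {q₁, q₂} :=
    fun _ _ _ _ h => Set.pair_eq_pair_of_two_pow_add_eq he <|
      Nat.add_eq_add_of_mul_add_add_mul_add_eq (hN _ _) (hN _ _) h
  refine ⟨ρ, injective_of_pair_eq_of_add_eq hpair,
    sup_add_inf_le_of_forall_incomparable fun p q hpq hqp =>
      (Nat.mul_add_add_mul_add_lt (notAboveCard_sup_add_notAboveCard_inf_lt hpq hqp) (hN _ _)).le,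
    fun _ _ _ _ => ⟨hpair _ _ _ _, add_eq_add_of_pair_eq ρ⟩⟩
end

section
/- Let V be a finite set, let f : 2^V → ℝ be a submodular function on the subsets of V, let k ∈ ℝ, and let 𝒳 = {X ⊆ V : f(X) < k}. Then 𝒳 can be unravelled: there is a sequence 𝒳 = 𝒳_n ⊇ 𝒳_{n−1} ⊇ ⋯ ⊇ 𝒳_0 = ∅ of families, each woven, such that |𝒳_i ∖ 𝒳_{i−1}| = 1 for every 1 ≤ i ≤ n. -/
/-!
Order the sublevel family `𝒳 = {X | f X < k}` totally: by increasing `f`, among equal values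
larger sets first, and remaining ties broken arbitrarily. Take `𝒳ᵢ` to be the first `i` sets.
For `X, Y ∈ 𝒳ᵢ` with `f Y ≤ f X` and `Y ⊄ X`, submodularity gives `f (X ∪ Y) ≤ f X` or
`f (X ∩ Y) < f X`; in either case that set precedes `X`, hence lies in `𝒳ᵢ`, so every `𝒳ᵢ` is
woven.
-/

open Set

def IsSubmodular {L : Type*} [Lattice L] (f : L → ℝ) : Prop :=
  ∀ a b, f (a ⊔ b) + f (a ⊓ b) ≤ f a + f b

def IsWoven {α : Type*} (𝒳 : Set (Set α)) : Prop :=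
  ∀ X ∈ 𝒳, ∀ Y ∈ 𝒳, X ∪ Y ∈ 𝒳 ∨ X ∩ Y ∈ 𝒳

def IsInitialSegment {α β : Type*} [LinearOrder β] (κ : α → β) (S 𝒴 : Set α) : Prop :=
  𝒴 ⊆ S ∧ ∀ X ∈ 𝒴, ∀ Y ∈ S, κ Y < κ X → Y ∈ 𝒴

section Rank

variable {α β : Type*} [LinearOrder β] {κ : α → β} {S : Set α}

noncomputable def keyRank (κ : α → β) (S : Set α) (X : α) : ℕ :=
  {Y ∈ S | κ Y < κ X}.ncard

lemma keyRank_lt_keyRank (hS : S.Finite) {X Y : α} (hY : Y ∈ S) (h : κ Y < κ X) :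
    keyRank κ S Y < keyRank κ S X :=
  ncard_lt_ncard ⟨fun _ hZ => ⟨hZ.1, hZ.2.trans h⟩, fun hsub => (hsub ⟨hY, h⟩).2.false⟩
    (hS.subset fun _ hZ => hZ.1)

lemma keyRank_lt_ncard (hS : S.Finite) {X : α} (hX : X ∈ S) : keyRank κ S X < S.ncard :=
  ncard_lt_ncard ⟨fun _ hY => hY.1, fun hsub => (hsub hX).2.false⟩ hS

lemma keyRank_injOn (hS : S.Finite) (hκ : InjOn κ S) : InjOn (keyRank κ S) S := by
  intro X hX Y hY hXY
  by_contra hne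
  rcases (hκ.ne hX hY hne).lt_or_gt with h | h
  · exact (keyRank_lt_keyRank hS hX h).ne hXY
  · exact (keyRank_lt_keyRank hS hY h).ne' hXY

lemma image_keyRank (hS : S.Finite) (hκ : InjOn κ S) : keyRank κ S '' S = Iio S.ncard := by
  refine eq_of_subset_of_ncard_le ?_ ?_ (finite_Iio _)
  · rintro _ ⟨X, hX, rfl⟩
    exact keyRank_lt_ncard hS hX
  · rw [(keyRank_injOn hS hκ).ncard_image]
    simp

theorem exists_chain_isInitialSegment (hS : S.Finite) (hκ : InjOn κ S) :
    ∃ (n : ℕ) (c : ℕ → Set α), c 0 = ∅ ∧ c n = S ∧ (∀ i, IsInitialSegment κ S (c i)) ∧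
      ∀ i < n, c i ⊆ c (i + 1) ∧ (c (i + 1) \ c i).ncard = 1 := by
  refine ⟨S.ncard, fun i => {X ∈ S | keyRank κ S X < i}, ?_, ?_, ?_, ?_⟩
  · simp
  · exact sep_eq_self_iff_mem_true.2 fun X hX => keyRank_lt_ncard hS hX
  · exact fun i =>
      ⟨sep_subset _ _, fun X hX Y hY h => ⟨hY, (keyRank_lt_keyRank hS hY h).trans hX.2⟩⟩
  · intro i hi
    obtain ⟨X₀, hX₀, hrank⟩ : i ∈ keyRank κ S '' S := by rwa [image_keyRank hS hκ]
    refine ⟨fun X hX => ⟨hX.1, hX.2.trans i.lt_succ_self⟩, ncard_eq_one.2 ⟨X₀, ?_⟩⟩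
    ext X
    simp only [mem_sdiff, mem_ofPred_eq, mem_singleton_iff, not_and, not_lt]
    constructor
    · rintro ⟨⟨hX, hlt⟩, hge⟩
      exact keyRank_injOn hS hκ hX hX₀ (by have := hge hX; omega)
    · rintro rfl
      exact ⟨⟨hX₀, by omega⟩, fun _ => hrank.ge⟩

end Rank

lemma IsSubmodular.sup_le_or_inf_lt {L : Type*} [Lattice L] {f : L → ℝ} (hf : IsSubmodular f)
    {a b : L} (h : f b ≤ f a) : f (a ⊔ b) ≤ f a ∨ f (a ⊓ b) < f a := by
  by_contra! hcon
  linarith [hf a b]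

section Sublevel

variable {V : Type*} [Fintype V] {f : Set V → ℝ}

open Classical in
noncomputable def sublevelKey (f : Set V → ℝ) (X : Set V) : ℝ ×ₗ ℕᵒᵈ ×ₗ ℕ :=
  toLex (f X, toLex (OrderDual.toDual X.ncard, (Fintype.equivFin (Set V) X : ℕ)))

lemma sublevelKey_injective : Function.Injective (sublevelKey f) := fun _ _ h =>
  (Fintype.equivFin (Set V)).injective <| Fin.val_injective <|
    congrArg (fun p => (ofLex (ofLex p).2).2) h

lemma sublevelKey_lt_of_lt {X Y : Set V} (h : f X < f Y) : sublevelKey f X < sublevelKey f Y :=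
  Prod.Lex.toLex_lt_toLex.2 (Or.inl h)

lemma sublevelKey_lt_of_le_of_ssubset {X Y : Set V} (hf : f Y ≤ f X) (hXY : X ⊂ Y) :
    sublevelKey f Y < sublevelKey f X := by
  rcases hf.lt_or_eq with h | h
  · exact sublevelKey_lt_of_lt h
  · exact Prod.Lex.toLex_lt_toLex.2
      (Or.inr ⟨h, Prod.Lex.toLex_lt_toLex.2 (Or.inl (ncard_lt_ncard hXY))⟩)

lemma IsInitialSegment.isWoven (hf : IsSubmodular f) {k : ℝ} {𝒴 : Set (Set V)}
    (h𝒴 : IsInitialSegment (sublevelKey f) {X | f X < k} 𝒴) : IsWoven 𝒴 := by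
  intro X hX Y hY
  wlog hYX : f Y ≤ f X generalizing X Y
  · rw [union_comm, inter_comm]
    exact this Y hY X hX (le_of_not_ge hYX)
  by_cases hsub : Y ⊆ X
  · rw [union_eq_self_of_subset_right hsub]
    exact Or.inl hX
  have hXk : f X < k := h𝒴.1 hX
  rcases hf.sup_le_or_inf_lt hYX with h | h
  · exact Or.inl (h𝒴.2 X hX _ (h.trans_lt hXk)
      (sublevelKey_lt_of_le_of_ssubset h (ssubset_union_left_iff.2 hsub)))
  · exact Or.inr (h𝒴.2 X hX _ (h.trans hXk) (sublevelKey_lt_of_lt h))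

end Sublevel

/-- If `V` is a finite set, `f : 2^V → ℝ` is submodular and
`𝒳 = {X | f X < k}`, then `𝒳` can be unravelled: there is a chain
`∅ = 𝒳₀ ⊆ 𝒳₁ ⊆ ⋯ ⊆ 𝒳ₙ = 𝒳` of woven families, each step adding exactly
one set. -/
theorem stmt_5 {V : Type*} [Fintype V] (f : Set V → ℝ)
    (hf : ∀ X Y : Set V, f (X ∪ Y) + f (X ∩ Y) ≤ f X + f Y) (k : ℝ) :
    ∃ (n : ℕ) (c : ℕ → Set (Set V)),
      c 0 = ∅ ∧ c n = {X : Set V | f X < k} ∧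
      (∀ i ≤ n, ∀ X ∈ c i, ∀ Y ∈ c i, X ∪ Y ∈ c i ∨ X ∩ Y ∈ c i) ∧
      (∀ i < n, c i ⊆ c (i + 1) ∧ (c (i + 1) \ c i).ncard = 1) := by
  obtain ⟨n, c, h0, hn, hseg, hstep⟩ :=
    exists_chain_isInitialSegment (toFinite {X : Set V | f X < k}) sublevelKey_injective.injOn
  exact ⟨n, c, h0, hn, fun i _ => (hseg i).isWoven hf, hstep⟩
end

section
/- Let U be a finite lattice equipped with an order-reversing involution * (a universe of separations). Then there exists a submodular function γ : U → ℕ that is symmetric, i.e. γ(s) = γ(s*) for all s ∈ U, and that distinguishes unoriented separations: for all r, s ∈ U, if γ(r) = γ(s) then r = s or r = s*. -/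
/-!
For a fixed `a`, the number `d_s(a)` of orientations among `s`, `s*` that do not lie below `a`
is a submodular function of `s`: the indicator of `¬ s ≤ a` is submodular in any lattice, and
so is that of `¬ s* ≤ a`, since `s* ≤ a ↔ a* ≤ s`. It takes values in `{0, 1, 2}` and is
symmetric, so `γ(s) = ∑ₐ d_s(a) 3^{i(a)}`, for an enumeration `i` of `U`, is submodular,
symmetric and determines the profile `d_s`. Finally the profile determines `{s, s*}`: the
elements above both orientations are those with `d_s(a) = 0`, those above one of them are
those with `d_s(a) ≤ 1`.
-/

open Function

theorem Fintype.sum_mul_pow_injective {ι : Type*} [Fintype ι] {m b : ℕ} (e : ι ≃ Fin m)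
    {f g : ι → ℕ} (hf : ∀ i, f i < b) (hg : ∀ i, g i < b)
    (h : ∑ i, f i * b ^ (e i : ℕ) = ∑ i, g i * b ^ (e i : ℕ)) : f = g := by
  have hfin : finFunctionFinEquiv (fun k => (⟨f (e.symm k), hf _⟩ : Fin b)) =
      finFunctionFinEquiv (fun k => (⟨g (e.symm k), hg _⟩ : Fin b)) := by
    ext
    simp only [finFunctionFinEquiv_apply]
    rw [← e.sum_comp, ← e.sum_comp]
    simpa only [Equiv.symm_apply_apply] using h
  funext i
  simpa using congrArg Fin.val (congrFun (finFunctionFinEquiv.injective hfin) (e i))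

section Lattice

variable {U : Type*} [Lattice U] [DecidableLE U]

theorem ite_not_le_submodular (s t a : U) :
    (if s ⊔ t ≤ a then 0 else 1) + (if s ⊓ t ≤ a then 0 else 1) ≤
      (if s ≤ a then 0 else 1) + (if t ≤ a then 0 else 1) := by
  have hs : s ≤ a → s ⊓ t ≤ a := inf_le_left.trans
  have ht : t ≤ a → s ⊓ t ≤ a := inf_le_right.trans
  have hst : s ≤ a → t ≤ a → s ⊔ t ≤ a := sup_le
  split_ifs <;> simp_all

theorem ite_not_ge_submodular (s t a : U) :
    (if a ≤ s ⊔ t then 0 else 1) + (if a ≤ s ⊓ t then 0 else 1) ≤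
      (if a ≤ s then 0 else 1) + (if a ≤ t then 0 else 1) := by
  have hs : a ≤ s → a ≤ s ⊔ t := (le_trans · le_sup_left)
  have ht : a ≤ t → a ≤ s ⊔ t := (le_trans · le_sup_right)
  have hst : a ≤ s → a ≤ t → a ≤ s ⊓ t := le_inf
  split_ifs <;> simp_all

end Lattice

section Separations

variable {U : Type*} [Lattice U] {star : U → U}

theorem star_le_comm (hinv : Involutive star) (hanti : Antitone star) {a b : U} :
    star a ≤ b ↔ star b ≤ a :=
  ⟨fun h => hinv a ▸ hanti h, fun h => hinv b ▸ hanti h⟩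

theorem le_star_comm (hinv : Involutive star) (hanti : Antitone star) {a b : U} :
    a ≤ star b ↔ b ≤ star a :=
  ⟨fun h => hinv b ▸ hanti h, fun h => hinv a ▸ hanti h⟩

theorem le_of_star_le_star (hinv : Involutive star) (hanti : Antitone star)
    {a b : U} (h : star a ≤ star b) : b ≤ a :=
  hinv a ▸ hinv b ▸ hanti h

variable [DecidableLE U]

variable (star) in
def orientationsNotLe (s a : U) : ℕ :=
  (if s ≤ a then 0 else 1) + (if star s ≤ a then 0 else 1)

theorem orientationsNotLe_lt_three (s a : U) : orientationsNotLe star s a < 3 := by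
  unfold orientationsNotLe
  split_ifs <;> omega

theorem orientationsNotLe_eq_zero_iff {s a : U} :
    orientationsNotLe star s a = 0 ↔ s ≤ a ∧ star s ≤ a := by
  unfold orientationsNotLe
  split_ifs <;> simp_all

theorem orientationsNotLe_le_one_iff {s a : U} :
    orientationsNotLe star s a ≤ 1 ↔ s ≤ a ∨ star s ≤ a := by
  unfold orientationsNotLe
  split_ifs <;> simp_all

theorem orientationsNotLe_star (hinv : Involutive star) (s a : U) :
    orientationsNotLe star (star s) a = orientationsNotLe star s a := by
  rw [orientationsNotLe, orientationsNotLe, hinv s, add_comm]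

theorem orientationsNotLe_submodular (hinv : Involutive star) (hanti : Antitone star)
    (s t a : U) :
    orientationsNotLe star (s ⊔ t) a + orientationsNotLe star (s ⊓ t) a ≤
      orientationsNotLe star s a + orientationsNotLe star t a := by
  have hflip (x : U) : (if star x ≤ a then 0 else 1) = (if star a ≤ x then 0 else 1) :=
    if_congr (star_le_comm hinv hanti) rfl rfl
  have hle := ite_not_le_submodular s t a
  have hge := ite_not_ge_submodular s t (star a)
  simp only [orientationsNotLe, hflip]
  omega

theorem eq_or_eq_star_of_forall_orientationsNotLe_eq (hinv : Involutive star)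
    (hanti : Antitone star) {r s : U}
    (h : ∀ a, orientationsNotLe star r a = orientationsNotLe star s a) :
    r = s ∨ r = star s := by
  wlog hsr : s ≤ r generalizing s
  · have h' : ∀ a, orientationsNotLe star r a = orientationsNotLe star (star s) a := by
      simpa only [orientationsNotLe_star hinv] using h
    have hs'r : star s ≤ r := by
      have := (h r).symm.trans_le (orientationsNotLe_le_one_iff.2 (.inl le_rfl))
      exact (orientationsNotLe_le_one_iff.1 this).resolve_left hsr
    simpa only [hinv s, or_comm] using this h' hs'r
  have hor (a : U) : r ≤ a ∨ star r ≤ a ↔ s ≤ a ∨ star s ≤ a := by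
    rw [← orientationsNotLe_le_one_iff, ← orientationsNotLe_le_one_iff, h a]
  have hand (a : U) : r ≤ a ∧ star r ≤ a ↔ s ≤ a ∧ star s ≤ a := by
    rw [← orientationsNotLe_eq_zero_iff, ← orientationsNotLe_eq_zero_iff, h a]
  by_cases hrs : r ≤ s
  · exact .inl (le_antisymm hrs hsr)
  have hr's : star r ≤ s := ((hor s).2 (.inl le_rfl)).resolve_left hrs
  have hs'r : star s ≤ r := ((hand r).1 ⟨le_rfl, hr's.trans hsr⟩).2
  rcases (hor (star r)).1 (.inr le_rfl) with hsr' | hs'r'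
  · exact .inr (le_antisymm ((le_star_comm hinv hanti).1 hsr') hs'r)
  · exact absurd (le_of_star_le_star hinv hanti hs'r') hrs

end Separations

/-- If `U` is a finite lattice with an order-reversing involution `star`
(a universe of separations), then there is a submodular function `γ : U → ℕ`
that is symmetric (`γ (star s) = γ s`) and distinguishes unoriented
separations: `γ r = γ s` implies `r = s` or `r = star s`. -/
theorem stmt_6 {U : Type*} [Lattice U] [Fintype U] (star : U → U)
    (hinv : ∀ s : U, star (star s) = s)
    (hanti : ∀ s t : U, s ≤ t → star t ≤ star s) :
    ∃ γ : U → ℕ,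
      (∀ s t : U, γ (s ⊔ t) + γ (s ⊓ t) ≤ γ s + γ t) ∧
      (∀ s : U, γ (star s) = γ s) ∧
      (∀ r s : U, γ r = γ s → r = s ∨ r = star s) := by
  classical
  have hanti' : Antitone star := fun s t => hanti s t
  let e := Fintype.equivFin U
  refine ⟨fun s => ∑ a, orientationsNotLe star s a * 3 ^ (e a : ℕ), fun s t => ?_, fun s => ?_,
    fun r s h => ?_⟩
  · simp only [← Finset.sum_add_distrib, ← add_mul]
    exact Finset.sum_le_sum fun a _ =>
      Nat.mul_le_mul_right _ (orientationsNotLe_submodular hinv hanti' s t a)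
  · simp only [orientationsNotLe_star hinv]
  · refine eq_or_eq_star_of_forall_orientationsNotLe_eq hinv hanti' fun a => congrFun ?_ a
    exact Fintype.sum_mul_pow_injective e (orientationsNotLe_lt_three r)
      (orientationsNotLe_lt_three s) h
end

section
/- Let U be a finite lattice equipped with an order-reversing involution * (a universe of separations), let f : U → ℝ be a submodular function with f(s) = f(s*) for all s, let k ∈ ℝ, and let S = {s ∈ U : f(s) < k}. Then S can be unravelled as a separation system: there is a sequence S = S_n ⊇ S_{n−1} ⊇ ⋯ ⊇ S_0 = ∅ of subsets of U, each closed under * and woven in U, such that for every 1 ≤ i ≤ n the set S_i ∖ S_{i−1} equals {s_i, s_i*} for some s_i ∈ U. -/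
/-!
Build the chain greedily: to the current stage `A` add a separation `x` whose value `f x` is
minimal outside `A` and which is `≤`-maximal among such minimisers, together with `star x`.
Every stage is then an initial segment of `S = {s | f s < k}` ordered by `f`, and
submodularity forces any pair `p, q` violating wovenness to have
`f (p ⊔ q) = f (p ⊓ q) = f x`; the maximal choice of `x` (applied to `p ⊔ q`, or to
`star (p ⊓ q)`) then puts `p ⊔ q` or `p ⊓ q` into the stage.
-/

theorem Set.exists_pairChain_of_step {α : Type*} (g : α → α) (P : Set α → Prop) {S : Set α}
    (hS : S.Finite)
    (step : ∀ A ⊆ S, P A → A ≠ S → ∃ B ⊆ S, P B ∧ A ⊆ B ∧ ∃ s, B \ A = {s, g s})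
    (A : Set α) (hAS : A ⊆ S) (hA : P A) :
    ∃ (n : ℕ) (c : ℕ → Set α), c 0 = A ∧ c n = S ∧ (∀ i ≤ n, P (c i)) ∧
      ∀ i < n, c i ⊆ c (i + 1) ∧ ∃ s, c (i + 1) \ c i = {s, g s} := by
  by_cases hAS' : A = S
  · exact ⟨0, fun _ => A, rfl, hAS', fun _ _ => hA, fun _ h => absurd h (Nat.not_lt_zero _)⟩
  obtain ⟨B, hBS, hB, hAB, hBA⟩ := step A hAS hA hAS'
  obtain ⟨n, c, hc0, hcn, hcP, hcstep⟩ := exists_pairChain_of_step g P hS step B hBS hB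
  refine ⟨n + 1, fun | 0 => A | i + 1 => c i, rfl, hcn, ?_, ?_⟩
  · rintro (_ | i) hi
    exacts [hA, hcP i (by omega)]
  · rintro (_ | i) hi
    · dsimp only
      rw [hc0]
      exact ⟨hAB, hBA⟩
    · exact hcstep i (by omega)
termination_by (S \ A).ncard
decreasing_by
  obtain ⟨s, hs⟩ := hBA
  have hsBA : s ∈ B \ A := hs ▸ Set.mem_insert s _
  refine Set.ncard_lt_ncard ⟨Set.sdiff_subset_sdiff_right hAB, fun h => ?_⟩ hS.sdiff
  exact (h ⟨hBS hsBA.1, hsBA.2⟩).2 hsBA.1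

section GreedyUnravelling

variable {U : Type*} [Lattice U] {star : U → U} {f : U → ℝ}

structure IsGreedyStage (star : U → U) (f : U → ℝ) (A : Set U) : Prop where
  star_mem : ∀ s ∈ A, star s ∈ A
  wovenIn : WovenIn A
  le_of_notMem : ∀ a ∈ A, ∀ z ∉ A, f a ≤ f z

theorem IsGreedyStage.wovenIn_union_pair (hinv : ∀ s, star (star s) = s)
    (hanti : ∀ s t, s ≤ t → star t ≤ star s)
    (hf : ∀ s t, f (s ⊔ t) + f (s ⊓ t) ≤ f s + f t) (hsymm : ∀ s, f (star s) = f s)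
    {A : Set U} (hA : IsGreedyStage star f A) {x : U}
    (hx : Maximal (fun z => z ∉ A ∧ ∀ y ∉ A, f z ≤ f y) x) :
    WovenIn (A ∪ {x, star x}) := by
  have hle_x : ∀ p ∈ A ∪ {x, star x}, f p ≤ f x := by
    rintro p (hp | rfl | rfl)
    · exact hA.le_of_notMem p hp x hx.1.1
    · rfl
    · exact (hsymm x).le
  intro p hp q hq
  by_contra! h
  obtain ⟨hsup, hinf⟩ : p ⊔ q ∉ A ∧ p ⊓ q ∉ A :=
    ⟨fun h' => h.1 (.inl h'), fun h' => h.2 (.inl h')⟩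
  have hmin_sup := hx.1.2 _ hsup
  have hmin_inf := hx.1.2 _ hinf
  have hsup_eq : f (p ⊔ q) = f x := by linarith [hf p q, hle_x p hp, hle_x q hq]
  have hinf_eq : f (p ⊓ q) = f x := by linarith [hf p q, hle_x p hp, hle_x q hq]
  have hx_not_le_sup : ¬ x ≤ p ⊔ q := fun hle => by
    refine h.1 (.inr (.inl (hx.eq_of_le ⟨hsup, fun y hy => ?_⟩ hle).symm))
    exact hsup_eq ▸ hx.1.2 y hy
  have hinf_not_le_star : ¬ p ⊓ q ≤ star x := fun hle => by
    have hstar_inf : star (p ⊓ q) ∉ A := fun h' => hinf (hinv (p ⊓ q) ▸ hA.star_mem _ h')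
    have := hx.eq_of_le ⟨hstar_inf, fun y hy => hsymm (p ⊓ q) ▸ hinf_eq ▸ hx.1.2 y hy⟩
      (hinv x ▸ hanti _ _ hle)
    exact h.2 (.inr (.inr (by rw [this, hinv]; rfl)))
  -- each of `p`, `q` lies in `A`, is `x` (so `x ≤ p ⊔ q`) or is `star x` (so `p ⊓ q ≤ star x`)
  rcases hp with hp | rfl | rfl <;> rcases hq with hq | rfl | rfl <;>
    first
    | exact hx_not_le_sup le_sup_left
    | exact hx_not_le_sup le_sup_right
    | exact hinf_not_le_star inf_le_left
    | exact hinf_not_le_star inf_le_right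
    | exact (hA.wovenIn p hp q hq).elim hsup hinf

theorem IsGreedyStage.exists_step [Finite U] (hinv : ∀ s, star (star s) = s)
    (hanti : ∀ s t, s ≤ t → star t ≤ star s)
    (hf : ∀ s t, f (s ⊔ t) + f (s ⊓ t) ≤ f s + f t) (hsymm : ∀ s, f (star s) = f s)
    {k : ℝ} {A : Set U} (hA : IsGreedyStage star f A) (hAS : A ⊆ {s | f s < k})
    (hne : A ≠ {s | f s < k}) :
    ∃ B ⊆ {s | f s < k}, IsGreedyStage star f B ∧ A ⊆ B ∧ ∃ s, B \ A = {s, star s} := by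
  obtain ⟨y, hyk, hyA⟩ : ∃ y, f y < k ∧ y ∉ A := by
    by_contra! h
    exact hne (hAS.antisymm fun y hy => h y hy)
  obtain ⟨x₀, hx₀A, hx₀min⟩ := Set.exists_min_image Aᶜ f (Set.toFinite _) ⟨y, hyA⟩
  obtain ⟨x, hx⟩ := (Set.toFinite {z | z ∉ A ∧ ∀ y ∉ A, f z ≤ f y}).exists_maximal
    ⟨x₀, hx₀A, hx₀min⟩
  have hxk : f x < k := (hx.1.2 y hyA).trans_lt hyk
  have hstar_x : star x ∉ A := fun h => hx.1.1 (hinv x ▸ hA.star_mem _ h)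
  refine ⟨A ∪ {x, star x}, ?_, ⟨?_, hA.wovenIn_union_pair hinv hanti hf hsymm hx, ?_⟩,
    Set.subset_union_left, x, ?_⟩
  · rintro z (hz | rfl | rfl)
    exacts [hAS hz, hxk, (hsymm x).trans_lt hxk]
  · rintro z (hz | rfl | rfl)
    · exact .inl (hA.star_mem z hz)
    · exact .inr (.inr rfl)
    · exact .inr (.inl (hinv x))
  · rintro a (ha | rfl | rfl) z hz
    · exact hA.le_of_notMem a ha z fun h => hz (.inl h)
    · exact hx.1.2 z fun h => hz (.inl h)
    · exact (hsymm x).trans_le (hx.1.2 z fun h => hz (.inl h))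
  · rw [Set.union_sdiff_left, sdiff_eq_left, Set.disjoint_left]
    rintro z (rfl | rfl)
    exacts [hx.1.1, hstar_x]

end GreedyUnravelling

/-- If `U` is a finite lattice with an order-reversing involution `star`,
`f : U → ℝ` is a symmetric submodular function, and `S = {s | f s < k}`, then
`S` can be unravelled as a separation system: there is a chain
`∅ = S₀ ⊆ ⋯ ⊆ Sₙ = S` of star-closed sets woven in `U`, each step adding
exactly `{s, star s}` for some `s`. -/
theorem stmt_7 {U : Type*} [Lattice U] [Fintype U] (star : U → U)
    (hinv : ∀ s : U, star (star s) = s)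
    (hanti : ∀ s t : U, s ≤ t → star t ≤ star s)
    (f : U → ℝ)
    (hf : ∀ s t : U, f (s ⊔ t) + f (s ⊓ t) ≤ f s + f t)
    (hsymm : ∀ s : U, f (star s) = f s) (k : ℝ) :
    ∃ (n : ℕ) (c : ℕ → Set U),
      c 0 = ∅ ∧ c n = {s : U | f s < k} ∧
      (∀ i ≤ n, WovenIn (c i) ∧ ∀ s ∈ c i, star s ∈ c i) ∧
      (∀ i < n, c i ⊆ c (i + 1) ∧
        ∃ s : U, c (i + 1) \ c i = {s, star s}) := by
  have hempty : IsGreedyStage star f ∅ := ⟨by simp, by simp [WovenIn], by simp⟩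
  obtain ⟨n, c, hc0, hcn, hstage, hstep⟩ :=
    Set.exists_pairChain_of_step star (IsGreedyStage star f) (Set.toFinite {s | f s < k})
      (fun _ hAS hA hne => hA.exists_step hinv hanti hf hsymm hAS hne) ∅ (Set.empty_subset _)
      hempty
  exact ⟨n, c, hc0, hcn, fun i hi => ⟨(hstage i hi).wovenIn, (hstage i hi).star_mem⟩, hstep⟩
end

section
/- Let U be a finite lattice equipped with an order-reversing involution *, and let S ⊊ U be a proper subset of U that is closed under * and woven in U. Then there exists r ∈ U ∖ S such that S ∪ {r, r*} is again woven in U. -/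
/-!
Take `r` maximal outside `S`, so every element above `r` other than `r` lies in `S`.
For `p ∈ S` this puts `r ⊔ p` and `r ⊔ star r` in `S ∪ {r}`, and, applying the involution to
`r ⊔ star p`, puts `star r ⊓ p = star (r ⊔ star p)` in `S ∪ {star r}`. These three facts are
all that is needed for `S ∪ {r, star r}` to stay woven.
-/

section

variable {L : Type*} [Lattice L]

theorem Antitone.map_sup_of_involutive {f : L → L} (hinv : Function.Involutive f)
    (hanti : Antitone f) (a b : L) : f (a ⊔ b) = f a ⊓ f b := by
  refine le_antisymm (le_inf (hanti le_sup_left) (hanti le_sup_right)) ?_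
  have h : a ⊔ b ≤ f (f a ⊓ f b) :=
    sup_le ((hinv a).ge.trans (hanti inf_le_left)) ((hinv b).ge.trans (hanti inf_le_right))
  simpa only [hinv _] using hanti h

theorem WovenIn.union_pair {S : Set L} (hS : WovenIn S) {a b : L}
    (ha : ∀ p ∈ S, a ⊔ p ∈ S ∪ {a, b}) (hb : ∀ p ∈ S, b ⊓ p ∈ S ∪ {a, b})
    (hab : a ⊔ b ∈ S ∪ {a, b}) : WovenIn (S ∪ {a, b}) := by
  rintro p (hp | rfl | rfl) q (hq | rfl | rfl)
  · exact (hS p hp q hq).imp Or.inl Or.inl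
  · exact Or.inl (sup_comm q p ▸ ha p hp)
  · exact Or.inr (inf_comm q p ▸ hb p hp)
  · exact Or.inl (ha q hq)
  · simp
  · exact Or.inl hab
  · exact Or.inr (hb q hq)
  · exact Or.inl (sup_comm p q ▸ hab)
  · simp

theorem WovenIn.union_pair_star {S : Set L} (hS : WovenIn S) {star : L → L}
    (hinv : Function.Involutive star) (hanti : Antitone star) (hstar : ∀ s ∈ S, star s ∈ S)
    {r : L} (hr : ∀ x, r ≤ x → x ∈ S ∨ x = r) : WovenIn (S ∪ {r, star r}) := by
  have above : ∀ x, r ≤ x → x ∈ S ∪ {r, star r} := fun x hx =>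
    (hr x hx).imp id (Or.inl ·)
  refine hS.union_pair (fun p _ => above _ le_sup_left) (fun p hp => ?_) (above _ le_sup_left)
  rw [show star r ⊓ p = star (r ⊔ star p) by rw [hanti.map_sup_of_involutive hinv, hinv]]
  rcases hr _ (le_sup_left : r ≤ r ⊔ star p) with h | h
  · exact Or.inl (hstar _ h)
  · exact Or.inr (Or.inr (congrArg star h))

end

/-- If `U` is a finite lattice with an order-reversing involution `star` and
`S ⊊ U` is star-closed and woven in `U`, then there is `r ∈ U ∖ S` such that
`S ∪ {r, star r}` is again woven in `U`. -/
theorem stmt_8 {U : Type*} [Lattice U] [Fintype U] (star : U → U)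
    (hinv : ∀ s : U, star (star s) = s)
    (hanti : ∀ s t : U, s ≤ t → star t ≤ star s)
    (S : Set U) (hstar : ∀ s ∈ S, star s ∈ S)
    (hwoven : WovenIn S) (hproper : S ≠ Set.univ) :
    ∃ r : U, r ∉ S ∧ WovenIn (S ∪ {r, star r}) := by
  obtain ⟨r, hr⟩ := Sᶜ.toFinite.exists_maximal (Set.nonempty_compl.mpr hproper)
  refine ⟨r, hr.prop, hwoven.union_pair_star hinv (fun s t h => hanti s t h) hstar fun x hx => ?_⟩
  by_cases hx' : x ∈ S
  · exact Or.inl hx'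
  · exact Or.inr (hr.eq_of_ge hx' hx)
end

section
/- Every finite woven poset P can be unravelled: there is a sequence P = P_n ⊇ P_{n−1} ⊇ ⋯ ⊇ P_0 = ∅ of subposets (with the induced order) such that each P_i is a woven poset and |P_i ∖ P_{i−1}| = 1 for every 1 ≤ i ≤ n. -/
/-!
Removing an element `x` that has a successor `σ` (a least element strictly above `x`) keeps
a poset woven: a supremum equal to `x` is replaced by `σ`, and `x` cannot be an infimum of two
other elements, since `σ` would be a larger lower bound. Dually for predecessors. A finite
woven poset in which no element has a predecessor has a top element `m`: otherwise take `x`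
minimal among the elements not below a maximal `m`; then `x` and `m` have no common upper
bound, so their infimum is a predecessor of `x`. Below a top element, any maximal element of
the rest has `m` as its successor. Hence every nonempty finite woven poset has an element
whose removal leaves it woven, and the unravelling is built by induction on the cardinality.
-/

/-- A subset `P` of a poset is woven (as a poset in its own right) if any two
of its elements have a supremum in `P` or an infimum in `P`. -/
def PosetWovenIn {α : Type*} [PartialOrder α] (P : Set α) : Prop :=
  ∀ p ∈ P, ∀ q ∈ P,
    (∃ r ∈ P, p ≤ r ∧ q ≤ r ∧ ∀ s ∈ P, p ≤ s → q ≤ s → r ≤ s) ∨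
    (∃ r ∈ P, r ≤ p ∧ r ≤ q ∧ ∀ s ∈ P, s ≤ p → s ≤ q → s ≤ r)

section Unravel

variable {α : Type*} [PartialOrder α] {S : Set α} {x : α}

def HasSuccIn (S : Set α) (x : α) : Prop :=
  ∃ σ ∈ S, x < σ ∧ ∀ u ∈ S, x < u → σ ≤ u

def HasPredIn (S : Set α) (x : α) : Prop :=
  ∃ π ∈ S, π < x ∧ ∀ u ∈ S, u < x → u ≤ π

theorem HasPredIn.toDual (h : HasPredIn S x) : HasSuccIn (α := αᵒᵈ) S x := h

theorem PosetWovenIn.toDual (hW : PosetWovenIn S) : PosetWovenIn (α := αᵒᵈ) S :=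
  fun p hp q hq => (hW p hp q hq).symm

theorem PosetWovenIn.ofDual (hW : PosetWovenIn (α := αᵒᵈ) S) : PosetWovenIn S :=
  fun p hp q hq => (hW p hp q hq).symm

theorem posetWovenIn_empty : PosetWovenIn (∅ : Set α) :=
  fun _ hp => hp.elim

theorem PosetWovenIn.diff_singleton_of_hasSuccIn (hW : PosetWovenIn S) (hx : HasSuccIn S x) :
    PosetWovenIn (S \ {x}) := by
  obtain ⟨σ, hσS, hxσ, hσ_least⟩ := hx
  intro p hp q hq
  rcases hW p hp.1 q hq.1 with ⟨r, hrS, hpr, hqr, hr_lub⟩ | ⟨r, hrS, hrp, hrq, hr_glb⟩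
  · left
    by_cases hrx : r = x
    · subst hrx
      refine ⟨σ, ⟨hσS, hxσ.ne'⟩, hpr.trans hxσ.le, hqr.trans hxσ.le, ?_⟩
      intro s hs hps hqs
      exact hσ_least s hs.1 ((hr_lub s hs.1 hps hqs).lt_of_ne (Ne.symm hs.2))
    · exact ⟨r, ⟨hrS, hrx⟩, hpr, hqr, fun s hs => hr_lub s hs.1⟩
  · right
    have hrx : r ≠ x := by
      rintro rfl
      have hσp : σ ≤ p := hσ_least p hp.1 (hrp.lt_of_ne (Ne.symm hp.2))
      have hσq : σ ≤ q := hσ_least q hq.1 (hrq.lt_of_ne (Ne.symm hq.2))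
      exact (hxσ.trans_le (hr_glb σ hσS hσp hσq)).false
    exact ⟨r, ⟨hrS, hrx⟩, hrp, hrq, fun s hs => hr_glb s hs.1⟩

theorem PosetWovenIn.diff_singleton_of_hasPredIn (hW : PosetWovenIn S) (hx : HasPredIn S x) :
    PosetWovenIn (S \ {x}) :=
  PosetWovenIn.ofDual (hW.toDual.diff_singleton_of_hasSuccIn hx.toDual)

theorem exists_isGreatest_of_forall_not_hasPredIn (hS : S.Finite) (hW : PosetWovenIn S)
    (hne : S.Nonempty) (hnp : ∀ x ∈ S, ¬ HasPredIn S x) : ∃ m, IsGreatest S m := by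
  obtain ⟨m, hm⟩ := hS.exists_maximal hne
  refine ⟨m, hm.prop, fun y hyS => ?_⟩
  by_contra hym
  obtain ⟨x, hx⟩ := (hS.subset (Set.sep_subset S (¬ · ≤ m))).exists_minimal ⟨y, hyS, hym⟩
  obtain ⟨hxS, hxm⟩ := hx.prop
  rcases hW x hxS m hm.prop with ⟨r, hrS, hxr, hmr, -⟩ | ⟨g, hgS, hgx, hgm, hg_glb⟩
  · exact hxm (hxr.trans (hm.eq_of_le hrS hmr).ge)
  · refine hnp x hxS ⟨g, hgS, hgx.lt_of_ne fun hgx => hxm (hgx ▸ hgm), fun u huS hux => ?_⟩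
    have hum : u ≤ m := by
      by_contra hum
      exact hx.not_lt ⟨huS, hum⟩ hux
    exact hg_glb u huS hux.le hum

theorem IsGreatest.hasSuccIn_of_maximal {m : α} (hm : IsGreatest S m)
    (hx : Maximal (· ∈ S \ {m}) x) : HasSuccIn S x := by
  refine ⟨m, hm.1, (hm.2 hx.prop.1).lt_of_ne hx.prop.2, fun u huS hxu => ?_⟩
  by_cases hum : u = m
  · exact hum.ge
  · exact absurd hxu (hx.not_gt ⟨huS, hum⟩)

theorem PosetWovenIn.exists_diff_singleton (hS : S.Finite) (hW : PosetWovenIn S)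
    (hne : S.Nonempty) : ∃ x ∈ S, PosetWovenIn (S \ {x}) := by
  by_cases hsucc : ∃ x ∈ S, HasSuccIn S x
  · obtain ⟨x, hxS, hx⟩ := hsucc
    exact ⟨x, hxS, hW.diff_singleton_of_hasSuccIn hx⟩
  by_cases hpred : ∃ x ∈ S, HasPredIn S x
  · obtain ⟨x, hxS, hx⟩ := hpred
    exact ⟨x, hxS, hW.diff_singleton_of_hasPredIn hx⟩
  push Not at hsucc hpred
  obtain ⟨m, hm⟩ := exists_isGreatest_of_forall_not_hasPredIn hS hW hne hpred
  refine ⟨m, hm.1, ?_⟩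
  rcases (S \ {m}).eq_empty_or_nonempty with hempty | hrest
  · exact hempty ▸ posetWovenIn_empty
  · obtain ⟨x, hx⟩ := (hS.subset Set.sdiff_subset).exists_maximal hrest
    exact absurd (hm.hasSuccIn_of_maximal hx) (hsucc x hx.prop.1)

def IsWovenUnravelling (S : Set α) (n : ℕ) (c : ℕ → Set α) : Prop :=
  c 0 = ∅ ∧ c n = S ∧ (∀ i ≤ n, PosetWovenIn (c i)) ∧
    (∀ i < n, c i ⊆ c (i + 1) ∧ (c (i + 1) \ c i).ncard = 1)

theorem IsWovenUnravelling.snoc {n : ℕ} {c : ℕ → Set α} (hc : IsWovenUnravelling (S \ {x}) n c)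
    (hxS : x ∈ S) (hW : PosetWovenIn S) :
    IsWovenUnravelling S (n + 1) (Function.update c (n + 1) S) := by
  obtain ⟨hc0, hcn, hc_woven, hc_step⟩ := hc
  have hc_lt : ∀ i ≤ n, Function.update c (n + 1) S i = c i := fun i hi =>
    Function.update_of_ne (show i ≠ n + 1 by omega) S c
  have hc_top : Function.update c (n + 1) S (n + 1) = S := Function.update_self _ _ _
  refine ⟨(hc_lt 0 n.zero_le).trans hc0, hc_top, fun i hi => ?_, fun i hi => ?_⟩
  · rcases hi.lt_or_eq with hi | rfl
    · exact hc_lt i (by omega) ▸ hc_woven i (by omega)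
    · rwa [hc_top]
  · rcases (Nat.lt_succ_iff.mp hi).lt_or_eq with hi | rfl
    · rw [hc_lt i hi.le, hc_lt (i + 1) hi]
      exact hc_step i hi
    · rw [hc_lt i le_rfl, hc_top, hcn, Set.sdiff_sdiff_cancel_left
        (Set.singleton_subset_iff.mpr hxS)]
      exact ⟨Set.sdiff_subset, Set.ncard_singleton x⟩

theorem PosetWovenIn.exists_isWovenUnravelling (hS : S.Finite) (hW : PosetWovenIn S) :
    ∃ c, IsWovenUnravelling S S.ncard c := by
  induction hn : S.ncard generalizing S with
  | zero =>
    have hempty : S = ∅ := (Set.ncard_eq_zero hS).mp hn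
    subst hempty
    exact ⟨fun _ => ∅, rfl, rfl, fun _ _ => posetWovenIn_empty, fun i hi => absurd hi i.not_lt_zero⟩
  | succ n ih =>
    obtain ⟨x, hxS, hWx⟩ := hW.exists_diff_singleton hS (Set.nonempty_of_ncard_ne_zero (by omega))
    have hn' : (S \ {x}).ncard = n := by
      have := Set.ncard_sdiff_singleton_add_one hxS hS
      omega
    obtain ⟨c, hc⟩ := ih (hS.subset Set.sdiff_subset) hWx hn'
    exact ⟨_, hc.snoc hxS hW⟩

end Unravel

/-- Every finite woven poset `P` can be unravelled: there is a chain
`∅ = P₀ ⊆ P₁ ⊆ ⋯ ⊆ Pₙ = P` of subposets, each woven with the induced order,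
each step adding exactly one element. -/
theorem stmt_12 {P : Type*} [PartialOrder P] [Fintype P]
    (h : PosetWovenIn (Set.univ : Set P)) :
    ∃ (n : ℕ) (c : ℕ → Set P),
      c 0 = ∅ ∧ c n = Set.univ ∧
      (∀ i ≤ n, PosetWovenIn (c i)) ∧
      (∀ i < n, c i ⊆ c (i + 1) ∧ (c (i + 1) \ c i).ncard = 1) :=
  let ⟨c, hc⟩ := h.exists_isWovenUnravelling Set.finite_univ
  ⟨_, c, hc⟩
end

section
/- Let P be a finite woven poset and let p ∈ P be an element with precisely one lower cover (or, dually, precisely one upper cover) in P. Then the induced subposet P ∖ {p} is again a woven poset. -/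
/-!
If `q` is the greatest element strictly below `p` (which is what a unique lower cover
amounts to in a finite poset), then removing `p` keeps every supremum except when the
supremum is `p` itself, and that cannot happen for two elements other than `p`, since
both would lie below `q`. An infimum equal to `p` is replaced by `q`, because everything
strictly below `p` lies below `q`. The upper-cover case is the order dual.
-/

open Set

section

variable {α : Type*} [PartialOrder α]

theorem posetWovenIn_preimage_ofDual_iff {S : Set α} :
    PosetWovenIn (OrderDual.ofDual ⁻¹' S) ↔ PosetWovenIn S :=
  forall₂_congr fun _ _ => forall₂_congr fun _ _ => or_comm

theorem exists_isGreatest_Iio_of_existsUnique_covBy [IsStronglyCoatomic α] {p : α}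
    (h : ∃! q, q ⋖ p) : ∃ q, IsGreatest (Iio p) q := by
  obtain ⟨q, hqp, huniq⟩ := h
  refine ⟨q, hqp.lt, fun x (hxp : x < p) => ?_⟩
  obtain ⟨y, hxy, hyp⟩ := exists_le_covBy_of_lt hxp
  exact huniq y hyp ▸ hxy

theorem exists_isLeast_Ioi_of_existsUnique_covBy [IsStronglyAtomic α] {p : α}
    (h : ∃! q, p ⋖ q) : ∃ q, IsLeast (Ioi p) q := by
  obtain ⟨q, hpq, huniq⟩ := h
  refine ⟨q, hpq.lt, fun x (hpx : p < x) => ?_⟩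
  obtain ⟨y, hpy, hyx⟩ := exists_covBy_le_of_lt hpx
  exact huniq y hpy ▸ hyx

theorem PosetWovenIn.compl_singleton_of_isGreatest_Iio (h : PosetWovenIn (univ : Set α))
    {p q : α} (hq : IsGreatest (Iio p) q) : PosetWovenIn ({p}ᶜ : Set α) := by
  have hqp : q < p := hq.1
  intro a (ha : a ≠ p) b (hb : b ≠ p)
  rcases h a trivial b trivial with ⟨r, -, har, hbr, hsup⟩ | ⟨r, -, hra, hrb, hinf⟩
  · have hrp : r ≠ p := by
      rintro rfl
      have hrq : r ≤ q :=
        hsup q trivial (hq.2 (har.lt_of_ne ha)) (hq.2 (hbr.lt_of_ne hb))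
      exact hrq.not_gt hqp
    exact Or.inl ⟨r, hrp, har, hbr, fun s _ => hsup s trivial⟩
  · by_cases hrp : r = p
    · subst hrp
      refine Or.inr ⟨q, hqp.ne, hqp.le.trans hra, hqp.le.trans hrb, fun s hs hsa hsb => ?_⟩
      exact hq.2 ((hinf s trivial hsa hsb).lt_of_ne hs)
    · exact Or.inr ⟨r, hrp, hra, hrb, fun s _ => hinf s trivial⟩

theorem PosetWovenIn.compl_singleton_of_isLeast_Ioi (h : PosetWovenIn (univ : Set α))
    {p q : α} (hq : IsLeast (Ioi p) q) : PosetWovenIn ({p}ᶜ : Set α) := by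
  rw [← posetWovenIn_preimage_ofDual_iff] at h ⊢
  exact h.compl_singleton_of_isGreatest_Iio (p := OrderDual.toDual p) hq

end

/-- If `P` is a finite woven poset and `p ∈ P` has precisely one lower cover
or precisely one upper cover, then the induced subposet `P ∖ {p}` is again
woven. -/
theorem stmt_13 {P : Type*} [PartialOrder P] [Fintype P]
    (h : PosetWovenIn (Set.univ : Set P)) (p : P)
    (hcov : (∃! q : P, q ⋖ p) ∨ (∃! q : P, p ⋖ q)) :
    PosetWovenIn ({p}ᶜ : Set P) := by
  rcases hcov with hlower | hupper
  · obtain ⟨q, hq⟩ := exists_isGreatest_Iio_of_existsUnique_covBy hlower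
    exact h.compl_singleton_of_isGreatest_Iio hq
  · obtain ⟨q, hq⟩ := exists_isLeast_Ioi_of_existsUnique_covBy hupper
    exact h.compl_singleton_of_isLeast_Ioi hq
end

section
/- Let P be a finite nonempty woven poset and let M be the set of maximal elements of P. Then every nonempty subset M′ ⊆ M has an infimum in P, i.e. there exists q ∈ P with q ≤ m for all m ∈ M′ and such that every s ∈ P with s ≤ m for all m ∈ M′ satisfies s ≤ q. -/
open Set

section

variable {α : Type*} [PartialOrder α]

theorem IsGLB.insert_of_isGLB_pair {s : Set α} {a q r : α} (hq : IsGLB s q)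
    (hr : IsGLB {a, q} r) : IsGLB (insert a s) r := by
  rw [isGLB_iff_le_iff] at hq hr ⊢
  intro b
  rw [hr, lowerBounds_insert, lowerBounds_insert, lowerBounds_singleton]
  simp only [mem_inter_iff, mem_Iic, hq]

theorem PosetWovenIn.exists_isGLB_pair_of_isMax (h : PosetWovenIn (univ : Set α)) {a : α}
    (ha : IsMax a) (q : α) : ∃ r, IsGLB {a, q} r := by
  rcases h a trivial q trivial with ⟨r, -, har, hqr, -⟩ | ⟨r, -, hra, hrq, hr⟩
  · have hqa : q ≤ a := hqr.trans (ha har)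
    exact ⟨q, IsLeast.isGLB ⟨by simp, by simp [hqa]⟩⟩
  · exact ⟨r, by simp [hra, hrq], fun s hs => hr s trivial (hs (by simp)) (hs (by simp))⟩

theorem PosetWovenIn.exists_isGLB_of_forall_isMax (h : PosetWovenIn (univ : Set α))
    {s : Set α} (hfin : s.Finite) (hne : s.Nonempty) (hmax : ∀ m ∈ s, IsMax m) :
    ∃ r, IsGLB s r := by
  induction s, hfin using Set.Finite.induction_on with
  | empty => exact absurd hne not_nonempty_empty
  | @insert a s _ _ ih =>
    have ha : IsMax a := hmax a (mem_insert a s)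
    rcases s.eq_empty_or_nonempty with rfl | hs
    · exact ⟨a, by rw [insert_empty_eq]; exact isGLB_singleton⟩
    obtain ⟨q, hq⟩ := ih hs fun m hm => hmax m (mem_insert_of_mem a hm)
    obtain ⟨r, hr⟩ := h.exists_isGLB_pair_of_isMax ha q
    exact ⟨r, hq.insert_of_isGLB_pair hr⟩

end

theorem stmt_14_general {P : Type*} [PartialOrder P] [Fintype P]
    (h : PosetWovenIn (Set.univ : Set P))
    (M' : Set P) (hne : M'.Nonempty)
    (hmax : ∀ m ∈ M', ∀ x : P, m ≤ x → x = m) :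
    ∃ q : P, (∀ m ∈ M', q ≤ m) ∧ ∀ s : P, (∀ m ∈ M', s ≤ m) → s ≤ q := by
  obtain ⟨q, hq⟩ := h.exists_isGLB_of_forall_isMax M'.toFinite hne
    fun m hm x hmx => (hmax m hm x hmx).le
  exact ⟨q, hq.1, fun s hs => hq.2 hs⟩

/-- In a finite nonempty woven poset `P`, every nonempty set `M'` of maximal
elements has an infimum in `P`. -/
theorem stmt_14 {P : Type*} [PartialOrder P] [Fintype P] [Nonempty P]
    (h : PosetWovenIn (Set.univ : Set P))
    (M' : Set P) (hne : M'.Nonempty)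
    (hmax : ∀ m ∈ M', ∀ x : P, m ≤ x → x = m) :
    ∃ q : P, (∀ m ∈ M', q ≤ m) ∧ ∀ s : P, (∀ m ∈ M', s ≤ m) → s ≤ q :=
  stmt_14_general h M' hne hmax
end

section
/- Let P be a finite woven poset, let M be the set of maximal elements of P, and for M′ ⊆ M let d(M′) = {x ∈ P : for every m ∈ M, x ≤ m if and only if m ∈ M′}. If M′ ⊆ M is subset-minimal with the property that d(M′) contains at least two elements, then there exists x ∈ d(M′) whose unique upper cover in P is the infimum of M′ in P (which exists). -/
/-!
Write `maxAbove x` for the set of maximal elements above `x`, so that `d N` is its fiber over `N`.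
The one place where wovenness enters: a minimal common upper bound `c` of `a` and `b` lies below
every maximal `m ≥ a, b`, since a supremum of `c` and `m` would be `m` itself, while an infimum
of `c` and `m` would be a common upper bound of `a` and `b` below `c`. Consequently the lower
bounds of `maxAbove a` have a greatest element `q`, whose fiber is that of `a`, and a fiber
`maxAbove ⁻¹' {N}` lies below `q = inf N`. Take `x` maximal in the fiber of `M'` minus `q`. Any
upper cover `y ≠ q` of `x` lies in a fiber over a proper subset of `M'`, which is a singleton by
minimality; a minimal common upper bound of `y` and `q` lies in that fiber, so equals `y`, and
then `x < q < y` contradicts `x ⋖ y`.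
-/

open Set

section Woven

variable {P : Type*} [PartialOrder P]

def maxAbove (x : P) : Set P := {m | IsMax m ∧ x ≤ m}

theorem maxAbove_anti {x y : P} (h : x ≤ y) : maxAbove y ⊆ maxAbove x :=
  fun _ hm => ⟨hm.1, h.trans hm.2⟩

theorem mem_lowerBounds_maxAbove (x : P) : x ∈ lowerBounds (maxAbove x) :=
  fun _ hm => hm.2

theorem maxAbove_eq_of_le_of_mem_lowerBounds {a q : P} (h : a ≤ q)
    (hq : q ∈ lowerBounds (maxAbove a)) : maxAbove q = maxAbove a :=
  (maxAbove_anti h).antisymm fun _ hm => ⟨hm.1, hq hm⟩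

theorem maxAbove_eq_iff {x : P} {N : Set P} (hN : ∀ m ∈ N, IsMax m) :
    maxAbove x = N ↔ ∀ m, IsMax m → (x ≤ m ↔ m ∈ N) := by
  refine ⟨fun h m hm => h ▸ ⟨fun hxm => ⟨hm, hxm⟩, And.right⟩, fun h => ?_⟩
  ext m
  exact ⟨fun hm => (h m hm.1).1 hm.2, fun hm => ⟨hN m hm, (h m (hN m hm)).2 hm⟩⟩

theorem maxAbove_nonempty [Finite P] (x : P) : (maxAbove x).Nonempty := by
  obtain ⟨m, hxm, hm⟩ := Finite.exists_le_maximal (p := fun _ : P => True) trivial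
  exact ⟨m, fun y hmy => hm.le_of_ge trivial hmy, hxm⟩

theorem exists_minimal_upperBound [Finite P] {a b m : P} (ham : a ≤ m) (hbm : b ≤ m) :
    ∃ c, Minimal (fun c => a ≤ c ∧ b ≤ c) c := by
  obtain ⟨c, -, hc⟩ := Finite.exists_le_minimal (p := fun c => a ≤ c ∧ b ≤ c) ⟨ham, hbm⟩
  exact ⟨c, hc⟩

theorem PosetWovenIn.le_of_minimal_of_isMax (hw : PosetWovenIn (univ : Set P)) {a b c m : P}
    (hc : Minimal (fun c => a ≤ c ∧ b ≤ c) c) (hm : IsMax m) (ham : a ≤ m) (hbm : b ≤ m) :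
    c ≤ m := by
  rcases hw c trivial m trivial with ⟨r, -, hcr, hmr, -⟩ | ⟨t, -, htc, htm, ht⟩
  · exact hcr.trans_eq (hm.eq_of_le hmr).symm
  · have hab : a ≤ t ∧ b ≤ t :=
      ⟨ht a trivial hc.prop.1 ham, ht b trivial hc.prop.2 hbm⟩
    exact (hc.eq_of_le hab htc).symm.trans_le htm

theorem PosetWovenIn.maxAbove_eq_of_minimal (hw : PosetWovenIn (univ : Set P)) {a b c : P}
    (hc : Minimal (fun c => a ≤ c ∧ b ≤ c) c) (hb : b ∈ lowerBounds (maxAbove a)) :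
    maxAbove c = maxAbove a :=
  maxAbove_eq_of_le_of_mem_lowerBounds hc.prop.1
    fun _ hm => hw.le_of_minimal_of_isMax hc hm.1 hm.2 (hb hm)

theorem PosetWovenIn.exists_isGLB_maxAbove [Finite P] (hw : PosetWovenIn (univ : Set P))
    (a : P) : ∃ q, a ≤ q ∧ IsGLB (maxAbove a) q := by
  obtain ⟨q, haq, hq⟩ := (toFinite (lowerBounds (maxAbove a))).exists_le_maximal
    (mem_lowerBounds_maxAbove a)
  refine ⟨q, haq, hq.prop, fun b hb => ?_⟩
  obtain ⟨m, hm⟩ := maxAbove_nonempty a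
  obtain ⟨c, hc⟩ := exists_minimal_upperBound (hq.prop hm) (hb hm)
  have hc_lb : c ∈ lowerBounds (maxAbove a) :=
    fun _ hm => hw.le_of_minimal_of_isMax hc hm.1 (hq.prop hm) (hb hm)
  exact hc.prop.2.trans_eq (hq.eq_of_le hc_lb hc.prop.1).symm

theorem PosetWovenIn.le_of_subsingleton_fiber [Finite P] (hw : PosetWovenIn (univ : Set P))
    {b y : P} (hy : (maxAbove ⁻¹' {maxAbove y}).Subsingleton)
    (hb : b ∈ lowerBounds (maxAbove y)) : b ≤ y := by
  obtain ⟨m, hm⟩ := maxAbove_nonempty y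
  obtain ⟨c, hc⟩ := exists_minimal_upperBound hm.2 (hb hm)
  have hcy : c = y := hy (hw.maxAbove_eq_of_minimal hc hb) rfl
  exact hcy ▸ hc.prop.2

theorem PosetWovenIn.exists_covBy_isGLB [Finite P] (hw : PosetWovenIn (univ : Set P))
    {N : Set P} (hN : (maxAbove ⁻¹' {N}).Nontrivial)
    (hmin : ∀ N' ⊂ N, (maxAbove ⁻¹' {N'}).Subsingleton) :
    ∃ x ∈ maxAbove ⁻¹' {N}, ∃ q, IsGLB N q ∧ ∀ y, x ⋖ y ↔ y = q := by
  obtain ⟨a, ha : maxAbove a = N⟩ := hN.nonempty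
  obtain ⟨q, haq, hq⟩ := hw.exists_isGLB_maxAbove a
  have hqN : maxAbove q = N := ha ▸ maxAbove_eq_of_le_of_mem_lowerBounds haq hq.1
  subst ha
  obtain ⟨x₀, hx₀, hx₀q⟩ := hN.exists_ne q
  obtain ⟨x, -, hx⟩ := (toFinite (maxAbove ⁻¹' {maxAbove a} \ {q})).exists_le_maximal
    (a := x₀) ⟨hx₀, hx₀q⟩
  obtain ⟨hxN : maxAbove x = maxAbove a, hx_ne : x ≠ q⟩ := hx.prop
  have hxq : x < q := (hq.2 (hxN ▸ mem_lowerBounds_maxAbove x)).lt_of_ne hx_ne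
  refine ⟨x, hxN, q, hq, fun y => ⟨fun hxy => ?_, ?_⟩⟩
  · by_contra hyq
    rcases (hxN ▸ maxAbove_anti hxy.le).eq_or_ssubset with hyN | hyN
    · exact hxy.lt.ne (hx.eq_of_le ⟨hyN, hyq⟩ hxy.le)
    · have hqy : q ≤ y := hw.le_of_subsingleton_fiber (hmin _ hyN)
        (lowerBounds_mono_set hyN.subset hq.1)
      exact hxy.2 hxq (hqy.lt_of_ne (Ne.symm hyq))
  · rintro rfl
    refine ⟨hxq, fun z hxz hzq => ?_⟩
    have hzN : maxAbove z = maxAbove a :=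
      (hxN ▸ maxAbove_anti hxz.le).antisymm (hqN ▸ maxAbove_anti hzq.le)
    exact hxz.ne (hx.eq_of_le ⟨hzN, hzq.ne⟩ hxz.le)

end Woven

/-- Let `P` be a finite woven poset, `M` its set of maximal elements, and for
`N ⊆ M` let `d N = {x | ∀ m ∈ M, x ≤ m ↔ m ∈ N}`. If `M' ⊆ M` is
subset-minimal with `|d M'| ≥ 2`, then there is `x ∈ d M'` whose unique upper
cover is the infimum of `M'` in `P` (which exists). -/
theorem stmt_15 {P : Type*} [PartialOrder P] [Fintype P]
    (hw : PosetWovenIn (Set.univ : Set P))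
    (M : Set P) (hM : M = {m : P | ∀ x : P, m ≤ x → x = m})
    (d : Set P → Set P)
    (hd : ∀ N : Set P, d N = {x : P | ∀ m ∈ M, (x ≤ m ↔ m ∈ N)})
    (M' : Set P) (hM'M : M' ⊆ M)
    (h2 : 2 ≤ (d M').ncard)
    (hmin : ∀ M'' : Set P, M'' ⊂ M' → (d M'').ncard < 2) :
    ∃ x ∈ d M', ∃ q : P,
      ((∀ m ∈ M', q ≤ m) ∧ ∀ s : P, (∀ m ∈ M', s ≤ m) → s ≤ q) ∧
      (∀ y : P, x ⋖ y ↔ y = q) := by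
  obtain rfl : M = {m | IsMax m} := by
    rw [hM]
    ext m
    exact ⟨fun h x hmx => (h x hmx).le, fun h x hmx => (h.eq_of_le hmx).symm⟩
  have hfiber : ∀ N ⊆ {m | IsMax m}, d N = maxAbove ⁻¹' {N} := fun N hN => by
    ext x
    rw [hd, mem_preimage, mem_singleton_iff, maxAbove_eq_iff hN]
    rfl
  obtain ⟨x, hx, q, hq, hcov⟩ := hw.exists_covBy_isGLB (N := M')
    (hfiber M' hM'M ▸ one_lt_ncard_iff_nontrivial.1 h2)
    (fun N hN => hfiber N (hN.subset.trans hM'M) ▸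
      ncard_le_one_iff_subsingleton.1 (Nat.le_of_lt_succ (hmin N hN)))
  exact ⟨x, hfiber M' hM'M ▸ hx, q, ⟨hq.1, fun s hs => hq.2 hs⟩, hcov⟩
end
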